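/- arXiv:0911.1009 — 8 statements merged into one kernel-verified Lean document; each statement's English description precedes it below -/
import Mathlib

section
/- In the weakly orthogonal TRS with unary symbols P and S and rules P(S(x)) → x and S(P(x)) → x, the infinitary unique normal form property UN∞ fails: there exists an infinite term q that rewrites (in strongly convergent reductions of length ≤ ω) both to the normal form S^ω and to the normal form P^ω. -/
/-- Infinite terms over the unary signature {S, P}, identified with streams
over {S,P}; `true` represents `S` and `false` represents `P`. -/
def SPStream : Type := ℕ → Bool

/-- A rewrite step at position `i`: the adjacent pair `S P` or `P S` starting
at position `i` is deleted (rules `P (S x) → x` and `S (P x) → x`). -/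
def stepAt (i : ℕ) (t t' : SPStream) : Prop :=
  t i ≠ t (i + 1) ∧ ∀ n, t' n = if n < i then t n else t (n + 2)

/-- A rewrite step (at any position). -/
def stepSP (t t' : SPStream) : Prop := ∃ i, stepAt i t t'

/-- A rewrite step at depth at least `d`. -/
def stepGe (d : ℕ) (t t' : SPStream) : Prop := ∃ i, d ≤ i ∧ stepAt i t t'

/-- `sconvTo t s`: there is a strongly convergent reduction of length `≤ ω`
from `t` to `s`: a sequence of stages `g n`, starting at `t`, where from stage
`n` on all contracted redexes are at depth `≥ n` (so depths tend to infinity),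
and stage `n` already agrees with the limit `s` below depth `n`. -/
def sconvTo (t s : SPStream) : Prop :=
  ∃ g : ℕ → SPStream, g 0 = t ∧
    (∀ n, Relation.ReflTransGen (stepGe n) (g n) (g (n + 1))) ∧
    (∀ n k, k < n → g n k = s k)

/-- `S^ω`, the stream of all `S`'s. -/
def Somega : SPStream := fun _ => true

/-- `P^ω`, the stream of all `P`'s. -/
def Pomega : SPStream := fun _ => false

/-- `psum t n`: number of `S`'s minus number of `P`'s among the
first `n` letters of `t`. -/
def psum (t : SPStream) : ℕ → ℤ
  | 0 => 0
  | n + 1 => psum t n + (if t n then 1 else -1)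

-- auxiliary part, to be appended after the given defs
def val (b : Bool) : ℤ := if b then 1 else -1

lemma psum_succ (t : SPStream) (n : ℕ) : psum t (n+1) = psum t n + val (t n) := rfl

lemma psum_cancel {t : SPStream} {j : ℕ} (h : t j ≠ t (j+1)) :
    psum t (j+2) = psum t j := by
  have h1 : psum t (j+2) = psum t j + val (t j) + val (t (j+1)) := by
    rw [show j+2 = (j+1)+1 from rfl, psum_succ, psum_succ]
  cases hb : t j <;> cases hb' : t (j+1) <;> simp_all [val]

lemma psum_stepAt {j : ℕ} {t t' : SPStream} (h : stepAt j t t') :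
    ∀ m, psum t' m = if m ≤ j then psum t m else psum t (m + 2) := by
  intro m; induction m with
  | zero => simp [psum]
  | succ m ih =>
    have ht' : t' m = if m < j then t m else t (m+2) := h.2 m
    rw [psum_succ, ih]
    by_cases h1 : m + 1 ≤ j
    · rw [if_pos h1, if_pos (by omega), ht', if_pos (by omega), ← psum_succ]
    · rw [if_neg h1]
      by_cases h2 : m ≤ j
      · have hm : m = j := by omega
        subst hm
        rw [if_pos le_rfl, ht', if_neg (by omega)]
        have hc := psum_cancel h.1
        have h3 : psum t (m+1+2) = psum t (m+2) + val (t (m+2)) := by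
          rw [show m+1+2 = (m+2)+1 from rfl, psum_succ]
        omega
      · rw [if_neg h2, ht', if_neg (by omega)]
        rw [show m+1+2 = (m+2)+1 from rfl]
        exact (psum_succ t (m+2)).symm

def del (t : SPStream) (i L : ℕ) : SPStream := fun n => if n < i then t n else t (n + L)

lemma val_eq (b : Bool) : val b = 1 ∨ val b = -1 := by cases b <;> simp [val]

lemma deleteBalanced : ∀ (L : ℕ) (t : SPStream) (i : ℕ),
    psum t (i + L) = psum t i →
    Relation.ReflTransGen (stepGe i) t (del t i L) := by
  intro L
  induction L using Nat.strong_induction_on with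
  | _ L IH =>
  intro t i hbal
  match L with
  | 0 =>
      have hd : del t i 0 = t := by funext n; simp [del]
      rw [hd]
  | 1 =>
      exfalso
      have h1 : psum t (i+1) = psum t i + val (t i) := psum_succ ..
      have hv := val_eq (t i)
      omega
  | (m+2) =>
      have hflip : ∃ j, i ≤ j ∧ j ≤ i + m ∧ t j ≠ t (j+1) := by
        by_contra hno
        push_neg at hno
        have hconst : ∀ x, x ≤ m + 1 → t (i + x) = t i := by
          intro x hx
          induction x with
          | zero => rfl
          | succ x ih2 =>
            have h1 : t (i + x) = t i := ih2 (by omega)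
            have h2 : t (i+x) = t (i+x+1) := hno (i+x) (by omega) (by omega)
            rw [show i + (x+1) = i + x + 1 from rfl, ← h2, h1]
        have hps : ∀ x, x ≤ m + 2 → psum t (i + x) = psum t i + x * val (t i) := by
          intro x hx
          induction x with
          | zero => simp [psum]
          | succ x ih2 =>
            have h1 := ih2 (by omega)
            have h2 : t (i + x) = t i := hconst x (by omega)
            rw [show i + (x+1) = (i + x) + 1 from rfl, psum_succ, h1, h2]
            push_cast; ring
        have hfin := hps (m+2) le_rfl
        have hv := val_eq (t i)
        rcases hv with hv | hv <;> rw [hv] at hfin <;> omega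
      obtain ⟨j, hij, hjm, hj⟩ := hflip
      set t1 : SPStream := fun n => if n < j then t n else t (n+2) with ht1
      have hstep : stepAt j t t1 := ⟨hj, fun n => rfl⟩
      have hpt1 := psum_stepAt hstep
      have hbal' : psum t (i + m + 2) = psum t i := by
        rw [show i + m + 2 = i + (m+2) from rfl]; exact hbal
      have hbal1 : psum t1 (i + m) = psum t1 i := by
        rw [hpt1, hpt1, if_pos hij]
        by_cases hc : i + m ≤ j
        · rw [if_pos hc]
          have hjj : j = i + m := by omega
          subst hjj
          have := psum_cancel hj
          omega
        · rw [if_neg hc]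
          exact hbal'
      have hdel : del t1 i m = del t i (m+2) := by
        funext n; simp only [del, ht1]
        by_cases hn : n < i
        · rw [if_pos hn, if_pos hn, if_pos (by omega)]
        · rw [if_neg hn, if_neg hn, if_neg (show ¬ n + m < j by omega)]
          exact congrArg t (by omega)
      have hrec := IH m (by omega) t1 i hbal1
      rw [hdel] at hrec
      exact Relation.ReflTransGen.head ⟨j, hij, hstep⟩ hrec

def stages (q : SPStream) (G : ℕ → SPStream) : ℕ → SPStream
  | 0 => q
  | n+1 => G n

lemma sconv_const (c : Bool) (q : SPStream) (a : ℕ → ℕ)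
    (ha : ∀ n, a n < a (n+1)) (h0 : psum q (a 0) = 0)
    (hc : ∀ n, q (a n) = c)
    (hstep : ∀ n, psum q (a (n+1)) = psum q (a n) + val c) :
    sconvTo q (fun _ => c) := by
  set G : ℕ → SPStream := fun m k => if k < m then c else q (a m + (k - m)) with hG
  refine ⟨stages q G, rfl, ?_, ?_⟩
  · intro n
    match n with
    | 0 =>
        show Relation.ReflTransGen (stepGe 0) q (G 0)
        have hb : psum q (0 + a 0) = psum q 0 := by
          rw [Nat.zero_add, h0]; rfl
        have h := deleteBalanced (a 0) q 0 hb
        have hd : del q 0 (a 0) = G 0 := by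
          funext k; simp only [del, hG]
          rw [if_neg (Nat.not_lt_zero k), if_neg (Nat.not_lt_zero k)]
          congr 1; omega
        rwa [hd] at h
    | (m+1) =>
        show Relation.ReflTransGen (stepGe (m+1)) (G m) (G (m+1))
        obtain ⟨L, hL⟩ : ∃ L, a m + 1 + L = a (m+1) := ⟨a (m+1) - (a m + 1), by have := ha m; omega⟩
        have hps : ∀ x, psum (G m) (m + x) = psum (G m) m + (psum q (a m + x) - psum q (a m)) := by
          intro x; induction x with
          | zero => simp
          | succ x ih =>
            have h1 : G m (m + x) = q (a m + x) := by
              simp only [hG]; rw [if_neg (by omega)]; congr 1; omega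
            rw [show m + (x+1) = (m+x)+1 from rfl, psum_succ, ih, h1,
                show a m + (x+1) = (a m + x) + 1 from rfl, psum_succ]
            ring
        have hbal : psum (G m) ((m+1) + L) = psum (G m) (m+1) := by
          have e1 := hps (1 + L)
          have e2 := hps 1
          have e3 : a m + (1 + L) = a (m+1) := by omega
          have e4 : psum q (a m + 1) = psum q (a m) + val c := by
            rw [psum_succ, hc]
          rw [e3] at e1
          have e5 := hstep m
          rw [show (m+1) + L = m + (1 + L) by omega, show m + 1 = m + 1 from rfl]
          rw [show m + 1 = m + 1 from rfl] at e2
          omega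
        have h := deleteBalanced L (G m) (m+1) hbal
        have hdel : del (G m) (m+1) L = G (m+1) := by
          funext k; simp only [del, hG]
          by_cases hk : k < m + 1
          · rw [if_pos hk, if_pos hk]
            by_cases hk2 : k < m
            · rw [if_pos hk2]
            · rw [if_neg hk2, show k - m = 0 by omega]
              exact hc m
          · rw [if_neg hk, if_neg (show ¬ k + L < m by omega), if_neg hk]
            congr 1; omega
        rwa [hdel] at h
  · intro n k hk
    match n with
    | (m+1) =>
      show G m k = c
      simp only [hG]
      by_cases h2 : k < m
      · rw [if_pos h2]
      · have hkm : k = m := by omega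
        subst hkm
        rw [if_neg (lt_irrefl k), show k - k = 0 by omega]
        exact hc k

-- the explicit zigzag stream
def Tfun : ℕ → ℕ
  | 0 => 0
  | k+1 => Tfun k + (k+1)

def invT : ℕ → ℕ
  | 0 => 0
  | n+1 => if n + 1 = Tfun (invT n + 1) then invT n + 1 else invT n

def runLetter (k : ℕ) : Bool := decide (k % 2 = 0)

def qq : SPStream := fun n => runLetter (invT n)

lemma Tfun_mono : ∀ {k k' : ℕ}, k ≤ k' → Tfun k ≤ Tfun k' := by
  intro k k' h
  induction h with
  | refl => exact le_rfl
  | @step m h ih => calc Tfun k ≤ Tfun m := ih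
                    _ ≤ Tfun (m+1) := by rw [Tfun]; omega

lemma invT_spec : ∀ n, Tfun (invT n) ≤ n ∧ n < Tfun (invT n + 1) := by
  intro n; induction n with
  | zero => refine ⟨le_rfl, ?_⟩; show 0 < Tfun 1; rw [Tfun]; simp [Tfun]
  | succ n ih =>
    show Tfun (invT (n+1)) ≤ n+1 ∧ n+1 < Tfun (invT (n+1) + 1)
    rw [invT]
    by_cases h : n + 1 = Tfun (invT n + 1)
    · rw [if_pos h]
      refine ⟨by omega, ?_⟩
      rw [Tfun]; omega
    · rw [if_neg h]; omega

lemma invT_eq {k n : ℕ} (h1 : Tfun k ≤ n) (h2 : n < Tfun (k+1)) : invT n = k := by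
  obtain ⟨s1, s2⟩ := invT_spec n
  rcases lt_trichotomy (invT n) k with h | h | h
  · exfalso; have := Tfun_mono (show invT n + 1 ≤ k from h); omega
  · exact h
  · exfalso; have := Tfun_mono (show k + 1 ≤ invT n from h); omega

lemma qq_eq {k j : ℕ} (hj : j < k + 1) : qq (Tfun k + j) = runLetter k := by
  unfold qq
  rw [invT_eq (Nat.le_add_right _ _) (by rw [Tfun]; omega)]

lemma runLetter_even {n : ℕ} (h : n % 2 = 0) : runLetter n = true := by
  simp only [runLetter, decide_eq_true_eq]; omega

lemma runLetter_odd {n : ℕ} (h : n % 2 = 1) : runLetter n = false := by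
  simp only [runLetter, decide_eq_false_iff_not]; omega

lemma psum_run (t : SPStream) (b : Bool) :
    ∀ (l m : ℕ), (∀ j, j < l → t (m+j) = b) → psum t (m + l) = psum t m + l * val b := by
  intro l
  induction l with
  | zero => intro m _; simp
  | succ l ih =>
    intro m h
    rw [show m + (l+1) = (m+l)+1 from rfl, psum_succ, ih m (fun j hj => h j (by omega)),
        h l (by omega)]
    push_cast; ring

lemma psum_T : ∀ k, psum qq (Tfun (2*k)) = -(k:ℤ) ∧ psum qq (Tfun (2*k+1)) = (k:ℤ)+1 := by
  intro k; induction k with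
  | zero =>
    constructor
    · show psum qq (Tfun 0) = 0; rfl
    · show psum qq (Tfun 1) = 1
      have h1 : Tfun 1 = Tfun 0 + 1 := rfl
      rw [h1, psum_run qq true 1 (Tfun 0)
        (fun j hj => by rw [qq_eq (by omega : j < 0 + 1)]; exact runLetter_even rfl)]
      simp [psum, val, Tfun]
  | succ k ih =>
    obtain ⟨ih1, ih2⟩ := ih
    have h1 : Tfun (2*k+1+1) = Tfun (2*k+1) + (2*k+2) := rfl
    have h2 : Tfun (2*k+2+1) = Tfun (2*k+2) + (2*k+3) := rfl
    have r1 : psum qq (Tfun (2*k+1) + (2*k+2)) =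
        psum qq (Tfun (2*k+1)) + (2*k+2 : ℕ) * val false := by
      refine psum_run qq false (2*k+2) _ (fun j hj => ?_)
      rw [qq_eq (by omega : j < (2*k+1) + 1)]
      exact runLetter_odd (by omega)
    have r2 : psum qq (Tfun (2*k+2) + (2*k+3)) =
        psum qq (Tfun (2*k+2)) + (2*k+3 : ℕ) * val true := by
      refine psum_run qq true (2*k+3) _ (fun j hj => ?_)
      rw [qq_eq (by omega : j < (2*k+2) + 1)]
      exact runLetter_even (by omega)
    simp only [val, if_true, if_false] at r1 r2
    constructor
    · rw [show 2*(k+1) = 2*k+1+1 from by ring, h1, r1]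
      push_cast; omega
    · rw [show 2*(k+1)+1 = 2*k+2+1 from by ring, h2, r2,
          show 2*k+2 = 2*k+1+1 from rfl, h1, r1]
      push_cast; omega

lemma psum_a (n : ℕ) : psum qq (Tfun (2*n) + 2*n) = (n:ℤ) := by
  have r : psum qq (Tfun (2*n) + 2*n) = psum qq (Tfun (2*n)) + (2*n : ℕ) * val true := by
    refine psum_run qq true (2*n) _ (fun j hj => ?_)
    rw [qq_eq (by omega : j < 2*n + 1)]
    exact runLetter_even (by omega)
  rw [r, (psum_T n).1]
  simp [val]; ring

lemma psum_b (n : ℕ) : psum qq (Tfun (2*n+1) + (2*n+1)) = -(n:ℤ) := by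
  have r : psum qq (Tfun (2*n+1) + (2*n+1)) =
      psum qq (Tfun (2*n+1)) + (2*n+1 : ℕ) * val false := by
    refine psum_run qq false (2*n+1) _ (fun j hj => ?_)
    rw [qq_eq (by omega : j < (2*n+1) + 1)]
    exact runLetter_odd (by omega)
  rw [r, (psum_T n).2]
  simp [val]; ring

/-- `S^ω` and `P^ω` are normal forms, and there is a stream `q`
that rewrites, by strongly convergent reductions, to both of them; hence the
weakly orthogonal TRS {P(S(x)) → x, S(P(x)) → x} does not satisfy UN∞. -/

theorem statement0 :
    (¬ ∃ t', stepSP Somega t') ∧ (¬ ∃ t', stepSP Pomega t') ∧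
    ∃ q : SPStream, sconvTo q Somega ∧ sconvTo q Pomega := by
  refine ⟨?_, ?_, qq, ?_, ?_⟩
  · rintro ⟨t', i, hne, -⟩; exact hne rfl
  · rintro ⟨t', i, hne, -⟩; exact hne rfl
  · show sconvTo qq (fun _ => true)
    refine sconv_const true qq (fun n => Tfun (2*n) + 2*n) ?_ ?_ ?_ ?_
    · intro n
      show Tfun (2*n) + 2*n < Tfun (2*(n+1)) + 2*(n+1)
      have h1 : Tfun (2*n+1) = Tfun (2*n) + (2*n+1) := rfl
      have h2 : Tfun (2*n+1+1) = Tfun (2*n+1) + (2*n+2) := rfl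
      have h3 : 2*(n+1) = 2*n+1+1 := by ring
      rw [h3, h2, h1]; omega
    · show psum qq (Tfun (2*0) + 2*0) = 0
      have := psum_a 0; simpa using this
    · intro n
      show qq (Tfun (2*n) + 2*n) = true
      rw [qq_eq (by omega : 2*n < 2*n + 1)]
      exact runLetter_even (by omega)
    · intro n
      show psum qq (Tfun (2*(n+1)) + 2*(n+1)) = psum qq (Tfun (2*n) + 2*n) + val true
      rw [psum_a, psum_a]
      simp [val]
  · show sconvTo qq (fun _ => false)
    refine sconv_const false qq (fun n => Tfun (2*n+1) + (2*n+1)) ?_ ?_ ?_ ?_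
    · intro n
      show Tfun (2*n+1) + (2*n+1) < Tfun (2*(n+1)+1) + (2*(n+1)+1)
      have h1 : Tfun (2*n+1+1) = Tfun (2*n+1) + (2*n+2) := rfl
      have h2 : Tfun (2*n+2+1) = Tfun (2*n+2) + (2*n+3) := rfl
      have h3 : 2*(n+1)+1 = 2*n+2+1 := by ring
      rw [h3, h2, show 2*n+2 = 2*n+1+1 from rfl, h1]; omega
    · show psum qq (Tfun (2*0+1) + (2*0+1)) = 0
      have := psum_b 0; simpa using this
    · intro n
      show qq (Tfun (2*n+1) + (2*n+1)) = false
      rw [qq_eq (by omega : 2*n+1 < (2*n+1) + 1)]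
      exact runLetter_odd (by omega)
    · intro n
      show psum qq (Tfun (2*(n+1)+1) + (2*(n+1)+1)) = psum qq (Tfun (2*n+1) + (2*n+1)) + val false
      rw [psum_b, psum_b]
      simp [val]
      ring
end

section
/- For the oscillating stream q = S^1 P^2 S^3 P^4 S^5 P^6 ⋯ over {S,P}, the partial sum function sum(q,n) (counting S as +1 and P as −1 over the first n letters) satisfies sup_n sum(q,n) = +∞ and inf_n sum(q,n) = −∞. -/
/-- The oscillating stream `q = S^1 P^2 S^3 P^4 ⋯`: the `k`-th block (counting
from `k = 0`) has length `k+1` and consists of `S`'s if `k` is even and `P`'s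
if `k` is odd.  Position `n` lies within the first `n+1` blocks. -/
def qStream : SPStream := fun n =>
  (((List.range (n + 1)).flatMap fun k => List.replicate (k + 1) (decide (Even k))).getD n false)

/-! ### Auxiliary development -/

/-- Triangular numbers: `Tn k` is the start position of block `k`. -/
def Tn : ℕ → ℕ
  | 0 => 0
  | k+1 => Tn k + (k+1)

/-- The concatenation of the first `M` blocks. -/
def Lm (M : ℕ) : List Bool :=
  (List.range M).flatMap fun k => List.replicate (k + 1) (decide (Even k))

lemma Lm_succ (M : ℕ) : Lm (M+1) = Lm M ++ List.replicate (M + 1) (decide (Even M)) := by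
  simp [Lm, List.range_succ]

lemma Lm_length (M : ℕ) : (Lm M).length = Tn M := by
  induction M with
  | zero => simp [Lm, Tn]
  | succ M ih => rw [Lm_succ]; simp [Tn, ih]

lemma Tn_mono {k M : ℕ} (h : k ≤ M) : Tn k ≤ Tn M := by
  induction h with
  | refl => exact le_rfl
  | step h ih => simp only [Tn]; omega

lemma le_Tn (k : ℕ) : k ≤ Tn k := by
  induction k with
  | zero => simp [Tn]
  | succ k ih => simp only [Tn]; omega

lemma repl_getD (n k : ℕ) (b : Bool) (h : n < k) :
    (List.replicate k b).getD n false = b := by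
  simp [List.getD, List.getElem?_replicate, h]

lemma getL (M k j : ℕ) (hk : k < M) (hj : j ≤ k) :
    (Lm M).getD (Tn k + j) false = decide (Even k) := by
  induction M with
  | zero => omega
  | succ M ih =>
    rw [Lm_succ]
    rcases Nat.lt_or_ge k M with h | h
    · rw [List.getD_append]
      · exact ih h
      · rw [Lm_length]
        have h1 : Tn (k+1) ≤ Tn M := Tn_mono h
        simp only [Tn] at h1; omega
    · have hkM : k = M := by omega
      subst hkM
      rw [List.getD_append_right]
      · rw [Lm_length]
        have h2 : Tn k + j - Tn k = j := by omega
        rw [h2, repl_getD _ _ _ (by omega)]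
      · rw [Lm_length]; omega

/-- Position `Tn k + j` (for `j ≤ k`) lies in block `k`. -/
lemma qval (k j : ℕ) (hj : j ≤ k) : qStream (Tn k + j) = decide (Even k) := by
  have hk : k < Tn k + j + 1 := by have := le_Tn k; omega
  exact getL _ _ _ hk hj

lemma psumBlock (k : ℕ) : ∀ j, j ≤ k + 1 →
    psum qStream (Tn k + j) = psum qStream (Tn k) + (if Even k then (j : ℤ) else -(j : ℤ)) := by
  intro j
  induction j with
  | zero => intro _; simp
  | succ j ih =>
    intro hj
    have h1 : Tn k + (j + 1) = (Tn k + j) + 1 := by omega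
    rw [h1]
    show psum qStream (Tn k + j) + _ = _
    rw [ih (by omega), qval k j (by omega)]
    by_cases h : Even k <;> simp [h] <;> push_cast <;> ring

lemma aRec (k : ℕ) : psum qStream (Tn (k+1)) =
    psum qStream (Tn k) + (if Even k then ((k : ℤ)+1) else -((k : ℤ)+1)) := by
  have h : Tn (k+1) = Tn k + (k+1) := rfl
  rw [h, psumBlock k (k+1) le_rfl]
  by_cases hk : Even k <;> simp [hk]

lemma aPair (j : ℕ) : psum qStream (Tn (2*j+1)) = (j : ℤ) + 1 ∧
    psum qStream (Tn (2*j+2)) = -((j : ℤ) + 1) := by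
  induction j with
  | zero =>
    have h1 : Tn (2*0+1) = 1 := rfl
    have h2 : Tn (2*0+2) = 3 := rfl
    rw [h1, h2]
    constructor
    · show psum qStream 1 = 1; decide
    · show psum qStream 3 = -(0+1); decide
  | succ j ih =>
    have h1 : 2*(j+1)+1 = (2*j+2)+1 := by ring
    have h2 : 2*(j+1)+2 = (2*(j+1)+1)+1 := by ring
    have e1 : psum qStream (Tn (2*(j+1)+1)) = (j:ℤ) + 2 := by
      rw [h1, aRec (2*j+2), ih.2]
      have hEv : Even (2*j+2) := ⟨j+1, by ring⟩
      simp [hEv]; push_cast; ring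
    constructor
    · rw [e1]; push_cast; ring
    · rw [h2, aRec (2*(j+1)+1), e1]
      have hOdd : ¬ Even (2*(j+1)+1) := by simp [Nat.even_add_one, parity_simps]
      simp [hOdd]; push_cast; ring

/-- for the oscillating stream `q`,
`sup_n sum(q,n) = +∞` and `inf_n sum(q,n) = −∞`. -/
theorem statement1 :
    (∀ m : ℤ, ∃ n : ℕ, m < psum qStream n) ∧ (∀ m : ℤ, ∃ n : ℕ, psum qStream n < m) := by
  constructor
  · intro m
    refine ⟨Tn (2*m.natAbs+1), ?_⟩
    rw [(aPair m.natAbs).1]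
    have := Int.le_natAbs (a := m); omega
  · intro m
    refine ⟨Tn (2*m.natAbs+2), ?_⟩
    rw [(aPair m.natAbs).2]
    have h1 : -m ≤ (m.natAbs : ℤ) := by
      have h : m ≤ (m.natAbs : ℤ) := Int.le_natAbs
      have h2 : m = (m.natAbs : ℤ) ∨ m = -(m.natAbs : ℤ) := Int.natAbs_eq m
      omega
    omega
end

section
/- An infinite stream t over {S,P} rewrites (by the rules SP → ε and PS → ε, via a strongly convergent reduction) to P^ω if and only if the lower S-height inf_n sum(t,n) equals −∞. -/
namespace SP3

/-- Delete the block of length `L` starting at position `a`. -/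
def del (a L : ℕ) (u : SPStream) : SPStream := fun k => if k < a then u k else u (k + L)

lemma psum_succ (u : SPStream) (m : ℕ) :
    psum u (m + 1) = psum u m + (if u m then 1 else -1) := rfl

lemma psum_del_le (u : SPStream) (a L : ℕ) :
    ∀ m, m ≤ a → psum (del a L u) m = psum u m := by
  intro m
  induction m with
  | zero => intro _; rfl
  | succ m ih =>
    intro h
    have hm : m < a := h
    rw [psum_succ, psum_succ, ih (Nat.le_of_lt hm)]
    have : del a L u m = u m := by simp [del, hm]
    rw [this]

lemma psum_del_ge (u : SPStream) (a L : ℕ) :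
    ∀ r, psum (del a L u) (a + r) =
      psum u a + (psum u (a + L + r) - psum u (a + L)) := by
  intro r
  induction r with
  | zero => simp [psum_del_le u a L a le_rfl]
  | succ r ih =>
    have h1 : a + (r + 1) = (a + r) + 1 := by omega
    have h2 : a + L + (r + 1) = (a + L + r) + 1 := by omega
    rw [h1, h2, psum_succ, psum_succ, ih]
    have hv : del a L u (a + r) = u (a + L + r) := by
      have h3 : ¬ a + r < a := by omega
      simp only [del, if_neg h3]
      congr 1
      omega
    rw [hv]
    ring

lemma pair_cancel (u : SPStream) (i : ℕ) (h : u i ≠ u (i + 1)) :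
    psum u (i + 2) = psum u i := by
  have e2 : psum u (i + 2) = psum u (i + 1) + (if u (i + 1) then 1 else -1) := rfl
  have e1 : psum u (i + 1) = psum u i + (if u i then 1 else -1) := rfl
  rw [e2, e1]
  cases hui : u i <;> cases hui1 : u (i + 1) <;> simp [hui, hui1] at h ⊢ <;> try ring

lemma del_balanced : ∀ (L : ℕ) (u : SPStream) (n : ℕ), psum u (n + L) = psum u n →
    Relation.ReflTransGen (stepGe n) u (del n L u) := by
  intro L
  induction L using Nat.strong_induction_on with
  | _ L IH =>
    intro u n hbal
    rcases Nat.eq_zero_or_pos L with h0 | hL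
    · subst h0
      have hdel : del n 0 u = u := funext fun k => by simp [del]
      rw [hdel]
    · by_cases hmix : ∃ i, n ≤ i ∧ i + 1 < n + L ∧ u i ≠ u (i + 1)
      · obtain ⟨i, hni, hiL, hne⟩ := hmix
        have hstep : stepAt i u (del i 2 u) := ⟨hne, fun k => rfl⟩
        set u' := del i 2 u with hu'
        have hpair : psum u (i + 2) = psum u i := pair_cancel u i hne
        -- the block [n, n+(L-2)) of u' is balanced
        have hbal' : psum u' (n + (L - 2)) = psum u' n := by
          have hr : n + (L - 2) = i + (n + L - 2 - i) := by omega
          have hge := psum_del_ge u i 2 (n + L - 2 - i)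
          have hE : i + 2 + (n + L - 2 - i) = n + L := by omega
          rw [hE, hpair] at hge
          rw [hr, hge, psum_del_le u i 2 n hni, hbal]
          ring
        have hred := IH (L - 2) (by omega) u' n hbal'
        have heq : del n (L - 2) u' = del n L u := by
          funext k
          by_cases hk : k < n
          · simp [del, hk, hu', Nat.lt_of_lt_of_le hk hni]
          · have h1 : ¬ k < n := hk
            have h2 : ¬ k + (L - 2) < i := by omega
            simp only [del, if_neg h1, hu', if_neg h2]
            congr 1
            omega
        rw [heq] at hred
        exact Relation.ReflTransGen.head ⟨i, hni, hstep⟩ hred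
      · exfalso
        push_neg at hmix
        have hconst : ∀ r, r < L → u (n + r) = u n := by
          intro r hr
          induction r with
          | zero => rfl
          | succ r ihr =>
            have h1 : u (n + r) = u (n + r + 1) := hmix (n + r) (by omega) (by omega)
            show u ((n + r) + 1) = u n
            rw [← h1, ihr (by omega)]
        have hsum : ∀ r, r ≤ L → psum u (n + r) = psum u n + r * (if u n then (1:ℤ) else -1) := by
          intro r
          induction r with
          | zero => intro _; simp
          | succ r ihr =>
            intro hr
            have h1 : n + (r + 1) = (n + r) + 1 := by omega
            rw [h1, psum_succ, ihr (by omega), hconst r (by omega)]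
            push_cast
            ring
        have := hsum L le_rfl
        rw [hbal] at this
        cases hn : u n <;> rw [hn] at this <;> simp at this <;> omega

lemma psum_false_prefix (u : SPStream) (n : ℕ) (h : ∀ k < n, u k = false) :
    ∀ m, m ≤ n → psum u m = -m := by
  intro m
  induction m with
  | zero => intro _; simp [psum]
  | succ m ih =>
    intro hm
    rw [psum_succ, ih (by omega), h m (by omega)]
    push_cast
    ring

lemma exists_prefix_min (u : SPStream) : ∀ T : ℕ, ∃ M : ℤ, ∀ k ≤ T, M ≤ psum u k := by
  intro T
  induction T with
  | zero =>
    exact ⟨psum u 0, fun k hk => by interval_cases k; exact le_rfl⟩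
  | succ T ih =>
    obtain ⟨M, hM⟩ := ih
    refine ⟨min M (psum u (T + 1)), fun k hk => ?_⟩
    by_cases h : k ≤ T
    · exact le_trans (min_le_left _ _) (hM k h)
    · have hk1 : k = T + 1 := by omega
      subst hk1; exact min_le_right _ _

/-- Unbounded below. -/
def Unb (u : SPStream) : Prop := ∀ m : ℤ, ∃ n : ℕ, psum u n < m

lemma step_lemma (n : ℕ) (u : SPStream) (hf : ∀ k < n, u k = false) (hu : Unb u) :
    ∃ v, Relation.ReflTransGen (stepGe n) u v ∧ (∀ k < n + 1, v k = false) ∧ Unb v := by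
  classical
  by_cases hn : u n = false
  · refine ⟨u, Relation.ReflTransGen.refl, fun k hk => ?_, hu⟩
    rcases Nat.lt_succ_iff_lt_or_eq.mp hk with h | h
    · exact hf k h
    · subst h; exact hn
  · have hpn : psum u n = -n := psum_false_prefix u n hf n le_rfl
    have hex : ∃ N, psum u N < -(n:ℤ) := hu (-(n:ℤ))
    set N0 := Nat.find hex with hN0def
    have hN0 : psum u N0 < -(n:ℤ) := Nat.find_spec hex
    have hmin : ∀ k, k < N0 → ¬ psum u k < -(n:ℤ) := fun k hk => Nat.find_min hex hk
    have hN0n : n < N0 := by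
      by_contra h
      have : psum u N0 = -(N0:ℤ) := psum_false_prefix u n hf N0 (by omega)
      rw [this] at hN0
      omega
    set j := N0 - 1 with hjdef
    have hjn : n ≤ j := by omega
    have hj1 : j + 1 = N0 := by omega
    have hpj : ¬ psum u j < -(n:ℤ) := hmin j (by omega)
    have hsj : psum u (j + 1) = psum u j + (if u j then 1 else -1) := rfl
    rw [hj1] at hsj
    have hujf : u j = false := by
      cases huj : u j
      · rfl
      · rw [huj] at hsj; simp at hsj; omega
    have hpj' : psum u j = -(n:ℤ) := by
      rw [hujf] at hsj; simp at hsj; omega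
    set L := j - n with hLdef
    have hbal : psum u (n + L) = psum u n := by
      have hnL : n + L = j := by omega
      rw [hnL, hpj', hpn]
    have hred := del_balanced L u n hbal
    refine ⟨del n L u, hred, ?_, ?_⟩
    · intro k hk
      rcases Nat.lt_succ_iff_lt_or_eq.mp hk with h | h
      · have : del n L u k = u k := by simp [del, h]
        rw [this]; exact hf k h
      · have hkL : del n L u k = u (n + L) := by
          have hnk : ¬ k < n := by omega
          simp only [del, if_neg hnk]
          rw [h]
        rw [hkL]
        have hnL : n + L = j := by omega
        rw [hnL]; exact hujf
    · intro m
      obtain ⟨M, hM⟩ := exists_prefix_min u (n + L)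
      obtain ⟨N', hN'⟩ := hu (min m M)
      have hN'big : n + L < N' := by
        by_contra h
        have := hM N' (by omega)
        have := min_le_right m M
        omega
      refine ⟨n + (N' - (n + L)), ?_⟩
      have hge := psum_del_ge u n L (N' - (n + L))
      have hE : n + L + (N' - (n + L)) = N' := by omega
      rw [hE, hbal] at hge
      rw [hge]
      have := min_le_left m M
      omega

lemma unb_sconv (t : SPStream) (hu : Unb t) : sconvTo t Pomega := by
  classical
  let f : (n : ℕ) → {u : SPStream // (∀ k, k < n → u k = false) ∧ Unb u} :=
    fun n => Nat.rec ⟨t, ⟨fun k hk => absurd hk (Nat.not_lt_zero k), hu⟩⟩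
      (fun n p => ⟨(step_lemma n p.1 p.2.1 p.2.2).choose,
        (step_lemma n p.1 p.2.1 p.2.2).choose_spec.2⟩) n
  refine ⟨fun n => (f n).1, rfl, fun n => ?_, fun n k hk => (f n).2.1 k hk⟩
  exact (step_lemma n (f n).1 (f n).2.1 (f n).2.2).choose_spec.1

lemma psum_step_sub {i : ℕ} {u u' : SPStream} (h : stepAt i u u') (m : ℕ) :
    ∃ m', psum u' m = psum u m' := by
  have hdel : u' = del i 2 u := funext fun k => h.2 k
  subst hdel
  by_cases hm : m ≤ i
  · exact ⟨m, psum_del_le u i 2 m hm⟩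
  · refine ⟨m + 2, ?_⟩
    have h2 := psum_del_ge u i 2 (m - i)
    rw [pair_cancel u i h.1] at h2
    have e1 : i + (m - i) = m := by omega
    have e2 : i + 2 + (m - i) = m + 2 := by omega
    rw [e1, e2] at h2
    rw [h2]
    ring

lemma psum_red_sub {d : ℕ} {u v : SPStream}
    (h : Relation.ReflTransGen (stepGe d) u v) :
    ∀ m, ∃ m', psum v m = psum u m' := by
  induction h with
  | refl => exact fun m => ⟨m, rfl⟩
  | tail _ hbc ih =>
    intro m
    obtain ⟨i, _, hi⟩ := hbc
    obtain ⟨m1, h1⟩ := psum_step_sub hi m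
    obtain ⟨m2, h2⟩ := ih m1
    exact ⟨m2, h1.trans h2⟩

end SP3

/-- a stream rewrites by a strongly convergent reduction to `P^ω`
iff its lower S-height `inf_n sum(t,n)` is `−∞` (i.e. the partial sums are
unbounded below). -/
theorem statement3 (t : SPStream) :
    sconvTo t Pomega ↔ ∀ m : ℤ, ∃ n : ℕ, psum t n < m := by
  constructor
  · rintro ⟨g, hg0, hred, hlim⟩ m
    have key : ∀ n, ∀ m, ∃ m', psum (g n) m = psum t m' := by
      intro n
      induction n with
      | zero => exact fun m => ⟨m, by rw [hg0]⟩
      | succ n ih =>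
        intro m
        obtain ⟨m1, h1⟩ := SP3.psum_red_sub (hred n) m
        obtain ⟨m2, h2⟩ := ih m1
        exact ⟨m2, h1.trans h2⟩
    set n := (-m).toNat + 1 with hndef
    have hfp : ∀ k, k < n → g n k = false := fun k hk => hlim n k hk
    have hpn : psum (g n) n = -(n : ℤ) := SP3.psum_false_prefix (g n) n hfp n le_rfl
    obtain ⟨m', hm'⟩ := key n n
    refine ⟨m', ?_⟩
    rw [← hm', hpn]
    push_cast
    omega
  · exact SP3.unb_sconv t
end

section
/- A stream t over {S,P} is root-active (i.e., for every finite reduction t →* t' there is a further reduction from t' contracting a redex at the root) if and only if sum(t,n) = 0 for infinitely many n. -/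
/-- `t` is root-active: after every finite reduction from `t` a further finite
reduction reaches a term with a redex at the root (position 0). -/
def rootActive (t : SPStream) : Prop :=
  ∀ t', Relation.ReflTransGen stepSP t t' →
    ∃ t'' t''', Relation.ReflTransGen stepSP t' t'' ∧ stepAt 0 t'' t'''

/-! Read `psum t` as a walk with steps `+1` for `S` and `-1` for `P`. Deleting a flip at `i` cuts
the two steps `i, i + 1` out of the walk, so its zeros beyond `i` are the old ones shifted down
by 2, and a root redex is exactly a return to zero at time 2. If the walk returns to zero infinitely
often, so does that of every reduct, and a return at time `m ≥ 2` is brought to the root by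
deleting flips inside the prefix of length `m`. If the last return is at `z`, deleting that prefix
gives a reduct whose walk never comes back to zero, a property every step preserves. -/

open Filter

namespace SPStream

def contract (i : ℕ) (t : SPStream) : SPStream := fun n => if n < i then t n else t (n + 2)

def drop (m : ℕ) (t : SPStream) : SPStream := fun n => t (n + m)

theorem stepAt_contract {i : ℕ} {t : SPStream} (h : t i ≠ t (i + 1)) :
    stepAt i t (t.contract i) :=
  ⟨h, fun _ => rfl⟩

theorem psum_succ (t : SPStream) (n : ℕ) :
    psum t (n + 1) = psum t n + (if t n then 1 else -1) := rfl

theorem psum_one_ne_zero (t : SPStream) : psum t 1 ≠ 0 := by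
  cases h : t 0 <;> simp [psum, h]

theorem psum_two_eq_zero_iff (t : SPStream) : psum t 2 = 0 ↔ t 0 ≠ t 1 := by
  cases h₀ : t 0 <;> cases h₁ : t 1 <;> simp [psum, h₀, h₁]

theorem psum_of_forall_eq {t : SPStream} {b : Bool} {n : ℕ} (h : ∀ k < n, t k = b) :
    psum t n = if b then (n : ℤ) else -n := by
  induction n with
  | zero => simp [psum]
  | succ n ih =>
    rw [psum_succ, ih fun k hk => h k (by omega), h n n.lt_succ_self]
    split_ifs <;> push_cast <;> ring

theorem exists_ne_succ_of_psum_eq_zero {t : SPStream} {m : ℕ} (hm : 0 < m)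
    (h : psum t m = 0) : ∃ i, i + 2 ≤ m ∧ t i ≠ t (i + 1) := by
  by_contra! hflat
  have hconst : ∀ k < m, t k = t 0 := by
    intro k hk
    induction k with
    | zero => rfl
    | succ k ih => rw [← hflat k (by omega), ih (by omega)]
  rw [psum_of_forall_eq hconst] at h
  split_ifs at h <;> omega

theorem psum_of_stepAt_of_le {i n : ℕ} {t t' : SPStream} (h : stepAt i t t') (hn : n ≤ i) :
    psum t' n = psum t n := by
  induction n with
  | zero => rfl
  | succ n ih => rw [psum_succ, psum_succ, h.2 n, if_pos (show n < i by omega), ih (by omega)]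

theorem psum_of_stepAt_of_ge {i n : ℕ} {t t' : SPStream} (h : stepAt i t t') (hn : i ≤ n) :
    psum t' n = psum t (n + 2) := by
  induction n, hn using Nat.le_induction with
  | base =>
    have hflip := h.1
    rw [psum_of_stepAt_of_le h le_rfl, psum_succ, psum_succ]
    cases hi₀ : t i <;> cases hi₁ : t (i + 1) <;> simp_all
  | succ n hin ih =>
    rw [psum_succ, psum_succ, h.2 n, if_neg (show ¬ n < i by omega), ih]

theorem psum_drop (t : SPStream) (m n : ℕ) : psum (t.drop m) n = psum t (n + m) - psum t m := by
  induction n with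
  | zero => simp [psum]
  | succ n ih =>
    rw [psum_succ, ih, Nat.add_right_comm, psum_succ, add_sub_right_comm]
    rfl

theorem exists_reduction_stepAt_zero_drop {t : SPStream} {m : ℕ} (h : psum t (m + 2) = 0) :
    ∃ u, Relation.ReflTransGen stepSP t u ∧ stepAt 0 u (t.drop (m + 2)) := by
  induction m using Nat.strong_induction_on generalizing t with
  | _ m ih =>
    obtain ⟨i, hi, hflip⟩ := exists_ne_succ_of_psum_eq_zero (by omega) h
    rcases m with _ | _ | m
    · exact ⟨t, .refl, (psum_two_eq_zero_iff t).1 h, fun n => rfl⟩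
    · have hstep := stepAt_contract hflip
      rw [← psum_of_stepAt_of_ge hstep (by omega)] at h
      exact absurd h (psum_one_ne_zero _)
    · have hstep := stepAt_contract hflip
      rw [← psum_of_stepAt_of_ge hstep (by omega)] at h
      obtain ⟨u, hred, hroot⟩ := ih m (by omega) h
      have hdrop : (t.contract i).drop (m + 2) = t.drop (m + 2 + 2) := by
        funext n
        simp only [drop, contract, if_neg (show ¬ n + (m + 2) < i by omega)]
        rfl
      exact ⟨u, .head ⟨i, hstep⟩ hred, hdrop ▸ hroot⟩

theorem reflTransGen_drop {t : SPStream} {m : ℕ} (h : psum t m = 0) :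
    Relation.ReflTransGen stepSP t (t.drop m) := by
  rcases m with _ | _ | m
  · exact .refl
  · exact absurd h (psum_one_ne_zero t)
  · obtain ⟨u, hred, hroot⟩ := exists_reduction_stepAt_zero_drop h
    exact hred.tail ⟨0, hroot⟩

theorem frequently_psum_eq_zero_of_reflTransGen {t t' : SPStream}
    (h : Relation.ReflTransGen stepSP t t') (ht : ∃ᶠ n in atTop, psum t n = 0) :
    ∃ᶠ n in atTop, psum t' n = 0 := by
  induction h with
  | refl => exact ht
  | tail _ hstep ih =>
    obtain ⟨i, hi⟩ := hstep
    refine frequently_atTop.2 fun a => ?_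
    obtain ⟨n, hn, hz⟩ := frequently_atTop.1 ih (a + i + 2)
    refine ⟨n - 2, by omega, ?_⟩
    rwa [psum_of_stepAt_of_ge hi (by omega), Nat.sub_add_cancel (by omega)]

theorem psum_ne_zero_of_reflTransGen {t t' : SPStream}
    (h : Relation.ReflTransGen stepSP t t') (ht : ∀ n, 0 < n → psum t n ≠ 0) :
    ∀ n, 0 < n → psum t' n ≠ 0 := by
  induction h with
  | refl => exact ht
  | tail _ hstep ih =>
    obtain ⟨i, hi⟩ := hstep
    intro n hn
    rcases le_total n i with hni | hin
    · rw [psum_of_stepAt_of_le hi hni]; exact ih n hn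
    · rw [psum_of_stepAt_of_ge hi hin]; exact ih (n + 2) (by omega)

theorem exists_last_psum_eq_zero {t : SPStream} (h : ∀ᶠ n in atTop, psum t n ≠ 0) :
    ∃ z, psum t z = 0 ∧ ∀ n, z < n → psum t n ≠ 0 := by
  obtain ⟨N, hN⟩ := eventually_atTop.1 h
  induction N with
  | zero => exact absurd rfl (hN 0 le_rfl)
  | succ N ih =>
    by_cases hz : psum t N = 0
    · exact ⟨N, hz, hN⟩
    · exact ih fun n hn => (eq_or_lt_of_le hn).elim (· ▸ hz) (hN n)

theorem exists_reduct_psum_ne_zero {t : SPStream} (h : ∀ᶠ n in atTop, psum t n ≠ 0) :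
    ∃ u, Relation.ReflTransGen stepSP t u ∧ ∀ n, 0 < n → psum u n ≠ 0 := by
  obtain ⟨z, hz, hlast⟩ := exists_last_psum_eq_zero h
  refine ⟨t.drop z, reflTransGen_drop hz, fun n hn => ?_⟩
  rw [psum_drop, hz, sub_zero]
  exact hlast (n + z) (by omega)

end SPStream

/-- a stream is root-active iff `sum(t,n) = 0` for
infinitely many `n`. -/
theorem statement4 (t : SPStream) :
    rootActive t ↔ {n : ℕ | psum t n = 0}.Infinite := by
  rw [← Nat.frequently_atTop_iff_infinite]
  constructor
  · intro hactive
    by_contra hfin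
    obtain ⟨u, htu, hu⟩ := SPStream.exists_reduct_psum_ne_zero (not_frequently.1 hfin)
    obtain ⟨v, w, huv, hroot⟩ := hactive u htu
    have hv : psum v 2 = 0 := (SPStream.psum_two_eq_zero_iff v).2 hroot.1
    exact SPStream.psum_ne_zero_of_reflTransGen huv hu 2 two_pos hv
  · intro hzeros t' htt'
    have ht' := SPStream.frequently_psum_eq_zero_of_reflTransGen htt' hzeros
    obtain ⟨m, hm, hz⟩ := frequently_atTop.1 ht' 2
    obtain ⟨k, rfl⟩ := Nat.exists_eq_add_of_le' hm
    obtain ⟨u, htu, hroot⟩ := SPStream.exists_reduction_stepAt_zero_drop hz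
    exact ⟨u, _, htu, hroot⟩
end

section
/- If during a reduction of a stream t (by deleting adjacent SP or PS pairs, with letters traced to their unique ancestors in t) the letter that was originally at position i of t ever arrives at the root position, then the prefix of t of length i is a zero word. -/
/-- Finite reductions from the stream `t` together with the ancestor map `φ`:
`φ j` is the position in `t` of the unique ancestor of the letter at position
`j` of the reduct.  A deletion step at position `i` shifts positions `≥ i`
by `2`. -/
inductive traced (t : SPStream) : SPStream → (ℕ → ℕ) → Prop
  | refl : traced t t id
  | step {u u' : SPStream} {φ : ℕ → ℕ} {i : ℕ} :
      traced t u φ → stepAt i u u' →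
      traced t u' (fun n => φ (if n < i then n else n + 2))


lemma psum_congr (a b : SPStream) (n : ℕ) (h : ∀ k, k < n → a k = b k) :
    psum a n = psum b n := by
  induction n with
  | zero => rfl
  | succ n ih =>
    simp only [psum, ih (fun k hk => h k (Nat.lt_succ_of_lt hk)),
      h n (Nat.lt_succ_self n)]

lemma psum_step {i : ℕ} {u u' : SPStream} (h : stepAt i u u') :
    ∀ n, psum u' n = if n < i then psum u n else psum u (n + 2) := by
  obtain ⟨hne, hdef⟩ := h
  intro n
  induction n with
  | zero =>
    by_cases hi : 0 < i
    · rw [if_pos hi]; rfl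
    · simp only [hi, if_neg]
      have : i = 0 := by omega
      subst this
      show (0:ℤ) = psum u 0 + _ + _
      rcases Bool.eq_false_or_eq_true (u 0) with h0 | h0 <;>
        rcases Bool.eq_false_or_eq_true (u 1) with h1 | h1 <;>
        simp_all [psum]
  | succ n ih =>
    by_cases hi : n + 1 < i
    · have hn : n < i := by omega
      simp only [if_pos hi, psum, ih, if_pos hn]
      rw [hdef n, if_pos hn]
    · by_cases hn : n < i
      · -- n + 1 = i
        have hni : i = n + 1 := by omega
        simp only [if_neg hi, psum, ih, if_pos hn]
        rw [hdef n, if_pos hn]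
        subst hni
        show psum u n + _ = psum u n + _ + _ + _
        rcases Bool.eq_false_or_eq_true (u (n+1)) with h0 | h0 <;>
          rcases Bool.eq_false_or_eq_true (u (n+2)) with h1 | h1 <;>
          simp_all [psum]
      · simp only [if_neg hi, if_neg hn] at *
        show psum u' n + _ = psum u (n + 2) + _
        rw [ih, hdef n, if_neg hn]

lemma traced_psum (t u : SPStream) (φ : ℕ → ℕ) (h : traced t u φ) :
    ∀ n, psum t (φ n) = psum u n := by
  induction h with
  | refl => intro n; rfl
  | @step u u' φ i hu hstep ih =>
    intro n
    simp only []
    rw [psum_step hstep n]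
    by_cases hn : n < i <;> simp [hn, ih]

/-- if during a reduction of `t` the letter originally at
position `i = φ 0` of `t` arrives at the root, then the prefix of `t` of
length `i` is a zero word, i.e. `sum(t, i) = 0`. -/
theorem statement7 (t u : SPStream) (φ : ℕ → ℕ) (h : traced t u φ) :
    psum t (φ 0) = 0 := by
  have := traced_psum t u φ h 0
  simpa [psum] using this
end

section
/- For a function f : ℕ → ℤ with f(0) = 0 and |f(n+1) − f(n)| = 1 for all n, the following are equivalent: (1) every integer value is attained by f only finitely often; (2) f(n) tends to +∞ or f(n) tends to −∞. -/
open Filter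

private lemma aux_pos (f : ℕ → ℤ) (h : ∀ n, |f (n + 1) - f n| = 1)
    (h1 : ∀ k : ℤ, {n : ℕ | f n = k}.Finite) (N : ℕ) (hN : ∀ n ≥ N, f n ≠ 0)
    (hpos : 0 < f N) : Tendsto f atTop atTop := by
  have key : ∀ n ≥ N, 0 < f n := by
    intro n hn
    induction n, hn using Nat.le_induction with
    | base => exact hpos
    | succ n hn ih =>
      have hb := abs_le.mp (h n).le
      have := hN (n + 1) (by omega)
      omega
  rw [tendsto_atTop]
  intro b
  have hS : (⋃ j ∈ Finset.Icc (1:ℤ) b, {n : ℕ | f n = j}).Finite :=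
    Set.Finite.biUnion (Finset.Icc (1:ℤ) b).finite_toSet (fun j _ => h1 j)
  obtain ⟨M, hM⟩ := hS.bddAbove
  rw [eventually_atTop]
  refine ⟨max N (M + 1), fun n hn => ?_⟩
  have hn1 : N ≤ n := le_trans (le_max_left _ _) hn
  have hn2 : M + 1 ≤ n := le_trans (le_max_right _ _) hn
  have hfn : 0 < f n := key n hn1
  by_contra hb
  push_neg at hb
  have : n ∈ ⋃ j ∈ Finset.Icc (1:ℤ) b, {n : ℕ | f n = j} := by
    refine Set.mem_biUnion ?_ rfl
    exact Finset.mem_coe.mpr (Finset.mem_Icc.mpr ⟨by omega, by omega⟩)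
  have := hM this
  omega

/-- for `f : ℕ → ℤ` with `f 0 = 0` and `|f (n+1) − f n| = 1` for
all `n`, every integer value is attained only finitely often iff `f` tends
to `+∞` or to `−∞`. -/
theorem statement9 (f : ℕ → ℤ) (h0 : f 0 = 0) (h : ∀ n, |f (n + 1) - f n| = 1) :
    (∀ k : ℤ, {n : ℕ | f n = k}.Finite) ↔
      (Tendsto f atTop atTop ∨ Tendsto f atTop atBot) := by
  constructor
  · intro h1
    obtain ⟨N, hN⟩ := (h1 0).bddAbove
    have hN' : ∀ n ≥ N + 1, f n ≠ 0 := by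
      intro n hn hfn
      have := hN hfn
      omega
    rcases lt_or_gt_of_ne (hN' (N + 1) le_rfl) with hneg | hpos
    · right
      rw [← tendsto_neg_atTop_iff]
      refine aux_pos (fun n => -f n) (fun n => by rw [← abs_neg]; rw [← h n]; ring_nf)
        (fun k => by simpa [neg_eq_iff_eq_neg] using h1 (-k)) (N + 1)
        (fun n hn => by simpa using hN' n hn) (by simpa using hneg)
    · left
      exact aux_pos f h h1 (N + 1) hN' hpos
  · rintro (ht | ht) k
    · have : ∀ᶠ n in atTop, k + 1 ≤ f n := ht.eventually_ge_atTop (k + 1)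
      obtain ⟨M, hM⟩ := eventually_atTop.mp this
      refine (Set.finite_lt_nat M).subset fun n hn => ?_
      simp only [Set.mem_setOf_eq] at hn ⊢
      by_contra hc
      have := hM n (by omega)
      omega
    · have : ∀ᶠ n in atTop, f n ≤ k - 1 := ht.eventually_le_atBot (k - 1)
      obtain ⟨M, hM⟩ := eventually_atTop.mp this
      refine (Set.finite_lt_nat M).subset fun n hn => ?_
      simp only [Set.mem_setOf_eq] at hn ⊢
      by_contra hc
      have := hM n (by omega)
      omega
end

section
/- There exists a stream t over {S,P} whose partial sum function satisfies sup_n sum(t,n) = +∞ but inf_n sum(t,n) > −∞, and such that sum(t,n) = 0 for infinitely many n. (Concretely, t = S P S² P² S³ P³ ⋯ works.) -/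
/-!
The stream `S P S² P² S³ P³ ⋯` has a zigzag height profile: over the block `S^(k+1) P^(k+1)`
the partial sum climbs from `0` to `k + 1` and falls back to `0`. So it never goes negative,
returns to `0` at the start of every block and reaches every height at some peak.
-/

/-- Moves one letter forward within the blocks `S^(k+1) P^(k+1)`, where the pair `(k, j)` means
offset `j` in block `k`. -/
def nextPos (p : ℕ × ℕ) : ℕ × ℕ :=
  if p.2 ≤ 2 * p.1 then (p.1, p.2 + 1) else (p.1 + 1, 0)

def blockPos : ℕ → ℕ × ℕ
  | 0 => (0, 0)
  | n + 1 => nextPos (blockPos n)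

/-- The stream `S P S² P² S³ P³ ⋯`. -/
def zigzag : SPStream := fun n => decide ((blockPos n).2 ≤ (blockPos n).1)

def blockHeight (p : ℕ × ℕ) : ℤ := min (p.2 : ℤ) (2 * p.1 + 2 - p.2)

lemma blockPos_snd_le (n : ℕ) : (blockPos n).2 ≤ 2 * (blockPos n).1 + 1 := by
  induction n with
  | zero => simp [blockPos]
  | succ n ih =>
    simp only [blockPos, nextPos]
    split_ifs <;> simp only <;> omega

lemma blockHeight_nextPos {p : ℕ × ℕ} (hp : p.2 ≤ 2 * p.1 + 1) :
    blockHeight (nextPos p) = blockHeight p + if p.2 ≤ p.1 then 1 else -1 := by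
  obtain ⟨k, j⟩ := p
  simp only [nextPos, blockHeight] at hp ⊢
  split_ifs <;> omega

lemma psum_zigzag (n : ℕ) : psum zigzag n = blockHeight (blockPos n) := by
  induction n with
  | zero => rfl
  | succ n ih =>
    rw [psum, ih, blockPos, blockHeight_nextPos (blockPos_snd_le n), zigzag]
    simp only [decide_eq_true_eq]

lemma blockPos_add_of_start {k : ℕ} (hk : blockPos (k * (k + 1)) = (k, 0)) :
    ∀ j ≤ 2 * k + 1, blockPos (k * (k + 1) + j) = (k, j)
  | 0, _ => hk
  | j + 1, hj => by
    rw [← add_assoc, blockPos, blockPos_add_of_start hk j (by omega), nextPos, if_pos (by omega)]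

lemma blockPos_block_start (k : ℕ) : blockPos (k * (k + 1)) = (k, 0) := by
  induction k with
  | zero => rfl
  | succ k ih =>
    have hlast := blockPos_add_of_start ih (2 * k + 1) le_rfl
    rw [show (k + 1) * (k + 1 + 1) = k * (k + 1) + (2 * k + 1) + 1 by ring, blockPos, hlast,
      nextPos, if_neg (by omega)]

lemma blockPos_add {k j : ℕ} (hj : j ≤ 2 * k + 1) : blockPos (k * (k + 1) + j) = (k, j) :=
  blockPos_add_of_start (blockPos_block_start k) j hj

lemma psum_zigzag_nonneg (n : ℕ) : 0 ≤ psum zigzag n := by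
  have := blockPos_snd_le n
  rw [psum_zigzag, blockHeight]
  omega

lemma psum_zigzag_block_start (k : ℕ) : psum zigzag (k * (k + 1)) = 0 := by
  rw [psum_zigzag, blockPos_block_start, blockHeight]
  omega

lemma psum_zigzag_block_peak (k : ℕ) : psum zigzag (k * (k + 1) + (k + 1)) = k + 1 := by
  rw [psum_zigzag, blockPos_add (by omega), blockHeight]
  omega

/-- there is a stream `t` over {S,P} whose partial sums are
unbounded above (upper S-height `+∞`) but bounded below (lower S-height
`> −∞`), and with `sum(t,n) = 0` for infinitely many `n`
(e.g. `t = S P S² P² S³ P³ ⋯`). -/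
theorem statement11 :
    ∃ t : SPStream, (∀ m : ℤ, ∃ n : ℕ, m < psum t n) ∧
      (∃ m : ℤ, ∀ n : ℕ, m ≤ psum t n) ∧
      {n : ℕ | psum t n = 0}.Infinite := by
  refine ⟨zigzag, fun m => ?_, ⟨0, psum_zigzag_nonneg⟩, ?_⟩
  · refine ⟨m.toNat * (m.toNat + 1) + (m.toNat + 1), ?_⟩
    rw [psum_zigzag_block_peak]
    omega
  · have hmono : StrictMono fun k : ℕ => k * (k + 1) :=
      strictMono_nat_of_lt_succ fun k => Nat.mul_lt_mul'' k.lt_succ_self (k + 1).lt_succ_self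
    exact Set.infinite_of_injective_forall_mem hmono.injective psum_zigzag_block_start
end

section
/- In a weakly orthogonal TRS, if u is a Y-redex in a term t (i.e., there are redexes v₁, v₂ at disjoint positions with u connected to both v₁ and v₂ by chains of pattern overlaps), then contracting u leaves t unchanged: the result of the contraction equals t. -/
/-!
All redexes of an overlap cluster contract `t` to the same term, so the two
redexes `v₁`, `v₂` at disjoint positions give one common result. Contracting
`v₁` changes `t` only at positions below `v₁.pos`, contracting `v₂` only below
`v₂.pos`; as no position lies below both, the common result agrees with `t`
at every position.
-/

open PFunctor

universe u

variable (F : Type) (ar : F → ℕ)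

/-- The polynomial functor whose M-type is the type of possibly infinite
terms over the signature `F` (with arities `ar`) and variables `ℕ`:
a node is either a function symbol (with `ar f` children) or a variable
(with no children). -/
abbrev TermPF : PFunctor.{0} :=
  ⟨F ⊕ ℕ, fun a => Fin (Sum.elim ar (fun _ => 0) a)⟩

/-- Possibly infinite terms (coinductive trees) over signature `F`. -/
def ITerm : Type := (TermPF F ar).M

/-- Finite terms over signature `F`, used for left-hand sides of rules. -/
inductive FTerm : Type
  | var : ℕ → FTerm
  | app : (f : F) → (Fin (ar f) → FTerm) → FTerm

variable {F ar}

/-- Embedding of finite terms into possibly infinite terms. -/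
def FTerm.toI : FTerm F ar → ITerm F ar
  | .var x => M.mk ⟨Sum.inr x, fun i => i.elim0⟩
  | .app f c => M.mk ⟨Sum.inl f, fun i => (c i).toI⟩

/-- Application of a substitution `σ` to a possibly infinite term: every
variable node `x` is replaced by the term `σ x` (corecursively; the marker
records whether we are already inside a substituted term). -/
def substI (σ : ℕ → ITerm F ar) (t : ITerm F ar) : ITerm F ar :=
  M.corec (fun s : Bool × ITerm F ar =>
    if s.1 then ⟨(M.dest s.2).1, fun i => (true, (M.dest s.2).2 i)⟩
    else
      match M.dest s.2 with
      | ⟨Sum.inl f, cs⟩ => ⟨Sum.inl f, fun i => (false, cs i)⟩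
      | ⟨Sum.inr x, _⟩ => ⟨(M.dest (σ x)).1, fun i => (true, (M.dest (σ x)).2 i)⟩)
    (false, t)

/-- The subterm of a term at a position (a list of argument indices),
if the position exists. -/
def subAt? : List ℕ → ITerm F ar → Option (ITerm F ar)
  | [], t => some t
  | i :: p, t =>
      if h : i < Sum.elim ar (fun _ => 0) (M.dest t).1 then
        subAt? p ((M.dest t).2 ⟨i, h⟩)
      else none

/-- The symbol (function symbol or variable) at a position of a term. -/
def symAt? (t : ITerm F ar) (p : List ℕ) : Option (F ⊕ ℕ) :=
  (subAt? p t).map fun u => (M.dest u).1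

/-- `replaceAt t p u` is the term obtained from `t` by replacing the subterm
at position `p` by `u` (defined corecursively). -/
def replaceAt (t : ITerm F ar) (p : List ℕ) (u : ITerm F ar) : ITerm F ar :=
  M.corec (fun s : (List ℕ × ITerm F ar) ⊕ ITerm F ar =>
    match s with
    | Sum.inl ([], _) => ⟨(M.dest u).1, fun i => Sum.inr ((M.dest u).2 i)⟩
    | Sum.inl (i :: p', v) =>
        ⟨(M.dest v).1, fun j =>
          if (j : ℕ) = i then Sum.inl (p', (M.dest v).2 j)
          else Sum.inr ((M.dest v).2 j)⟩
    | Sum.inr v => ⟨(M.dest v).1, fun i => Sum.inr ((M.dest v).2 i)⟩)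
    (Sum.inl (p, t))

/-- The list of variable occurrences of a finite term (from left to right). -/
def FTerm.varsList : FTerm F ar → List ℕ
  | .var x => [x]
  | .app _ c => (List.ofFn fun i => (c i).varsList).flatten

/-- The pattern positions of a finite term: the positions carrying a function
symbol (non-variable positions). -/
def FTerm.patPos : FTerm F ar → Set (List ℕ)
  | .var _ => ∅
  | .app f c => {[]} ∪ ⋃ i : Fin (ar f), (fun q => (i : ℕ) :: q) '' (c i).patPos

/-- The positions of the variable `x` in a finite term. -/
def FTerm.varPos : FTerm F ar → ℕ → Set (List ℕ)
  | .var y, x => if y = x then {[]} else ∅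
  | .app f c, x => ⋃ i : Fin (ar f), (fun q => (i : ℕ) :: q) '' (c i).varPos x

variable (F ar)

/-- An infinitary rewrite rule: a finite left-hand side that is not a
variable, and a possibly infinite right-hand side all of whose variables
occur in the left-hand side. -/
structure Rule : Type where
  lhs : FTerm F ar
  rhs : ITerm F ar
  lhs_nonvar : ∀ x, lhs ≠ .var x
  varcond : ∀ x p, symAt? rhs p = some (Sum.inr x) → x ∈ lhs.varsList

variable {F ar}

/-- A rule is left-linear if no variable occurs twice in its left-hand side. -/
def Rule.LeftLinear (ρ : Rule F ar) : Prop := ρ.lhs.varsList.Nodup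

/-- A rule is collapsing if its right-hand side is a variable. -/
def Rule.Collapsing (ρ : Rule F ar) : Prop := ∃ x, (M.dest ρ.rhs).1 = Sum.inr x

variable (F ar)

/-- A (candidate) redex: a position, a rule and a matching substitution. -/
structure Rdx : Type where
  pos : List ℕ
  rule : Rule F ar
  sub : ℕ → ITerm F ar

variable {F ar}

/-- `u.In R t`: `u` is a redex of the term `t` with respect to the rewrite
system `R`: its rule belongs to `R` and the subterm of `t` at `u.pos` is the
corresponding instance of the left-hand side. -/
def Rdx.In (u : Rdx F ar) (R : Set (Rule F ar)) (t : ITerm F ar) : Prop :=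
  u.rule ∈ R ∧ subAt? u.pos t = some (substI u.sub u.rule.lhs.toI)

/-- The result of contracting the redex `u` in the term `t`. -/
def Rdx.result (u : Rdx F ar) (t : ITerm F ar) : ITerm F ar :=
  replaceAt t u.pos (substI u.sub u.rule.rhs)

/-- Two redexes overlap if their patterns share a position. -/
def Rdx.Overlaps (u v : Rdx F ar) : Prop :=
  ∃ q, (∃ r ∈ u.rule.lhs.patPos, q = u.pos ++ r) ∧
    (∃ r ∈ v.rule.lhs.patPos, q = v.pos ++ r)

/-- A weakly orthogonal iTRS: all rules are left-linear and all critical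
pairs are trivial, i.e. contracting either of two overlapping redexes of a
term always yields the same result. -/
def WeaklyOrthogonal (R : Set (Rule F ar)) : Prop :=
  (∀ ρ ∈ R, ρ.LeftLinear) ∧
  ∀ (t : ITerm F ar) (u v : Rdx F ar),
    u.In R t → v.In R t → u.Overlaps v → u.result t = v.result t

/-- The overlap relation on the redexes of a fixed term `t`. -/
def OverlapIn {F : Type} {ar : F → ℕ} (R : Set (Rule F ar)) (t : ITerm F ar)
    (u v : Rdx F ar) : Prop :=
  u.In R t ∧ v.In R t ∧ u.Overlaps v

/-- Two positions are disjoint if neither is a prefix of the other. -/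
def DisjPos (p q : List ℕ) : Prop := ¬ p <+: q ∧ ¬ q <+: p

/-- `u` is a Y-redex of `t`: `u` is a redex of `t` that is connected by chains
of pattern overlaps (within `t`) to two redexes `v₁`, `v₂` of `t` at disjoint
positions. -/
def YRedex {F : Type} {ar : F → ℕ} (R : Set (Rule F ar)) (t : ITerm F ar)
    (u : Rdx F ar) : Prop :=
  u.In R t ∧ ∃ v₁ v₂ : Rdx F ar, v₁.In R t ∧ v₂.In R t ∧
    Relation.ReflTransGen (OverlapIn R t) u v₁ ∧
    Relation.ReflTransGen (OverlapIn R t) u v₂ ∧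
    DisjPos v₁.pos v₂.pos

lemma symAt?_nil (t : ITerm F ar) : symAt? t [] = some (M.dest t).1 := rfl

lemma symAt?_cons (t : ITerm F ar) (i : ℕ) (p : List ℕ) :
    symAt? t (i :: p) =
      if h : i < Sum.elim ar (fun _ => 0) (M.dest t).1 then
        symAt? ((M.dest t).2 ⟨i, h⟩) p
      else none := by
  simp only [symAt?, subAt?]
  split <;> rfl

lemma ITerm.ext_symAt? {x y : ITerm F ar}
    (h : ∀ p, symAt? x p = symAt? y p) : x = y := by
  refine M.bisim (fun a b => ∀ p, symAt? (F := F) (ar := ar) a p = symAt? b p) ?_ x y h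
  intro a b hab
  rcases ha : M.dest a with ⟨f, ga⟩
  rcases hb : M.dest b with ⟨f', gb⟩
  obtain rfl : f = f' := by
    have := hab []
    rw [symAt?_nil (t := a), symAt?_nil (t := b), ha, hb] at this
    exact Option.some_inj.mp this
  refine ⟨f, ga, gb, rfl, rfl, fun i p => ?_⟩
  have := hab ((i : ℕ) :: p)
  rw [symAt?_cons (t := a), symAt?_cons (t := b), ha, hb, dif_pos i.isLt, dif_pos i.isLt] at this
  simpa using this

def replaceAtStep (u : ITerm F ar) :
    (List ℕ × ITerm F ar) ⊕ ITerm F ar →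
      (TermPF F ar) ((List ℕ × ITerm F ar) ⊕ ITerm F ar)
  | Sum.inl ([], _) => ⟨(M.dest u).1, fun i => Sum.inr ((M.dest u).2 i)⟩
  | Sum.inl (i :: p', v) =>
      ⟨(M.dest v).1, fun j =>
        if (j : ℕ) = i then Sum.inl (p', (M.dest v).2 j)
        else Sum.inr ((M.dest v).2 j)⟩
  | Sum.inr v => ⟨(M.dest v).1, fun i => Sum.inr ((M.dest v).2 i)⟩

lemma replaceAt_eq_corec (t : ITerm F ar) (p : List ℕ) (u : ITerm F ar) :
    replaceAt t p u = M.corec (replaceAtStep u) (Sum.inl (p, t)) := rfl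

lemma corec_replaceAtStep_inr (u v : ITerm F ar) :
    M.corec (replaceAtStep u) (Sum.inr v) = v := by
  refine M.bisim (fun a b => a = M.corec (replaceAtStep u) (Sum.inr b)) ?_ _ _ rfl
  rintro _ b rfl
  refine ⟨(M.dest b).1, fun i => M.corec (replaceAtStep u) (Sum.inr ((M.dest b).2 i)),
    (M.dest b).2, ?_, (Sigma.eta _).symm, fun i => rfl⟩
  rw [M.dest_corec]
  rfl

lemma dest_replaceAt_cons (t u : ITerm F ar) (i : ℕ) (p : List ℕ) :
    M.dest (replaceAt t (i :: p) u) =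
      ⟨(M.dest t).1, fun j =>
        if (j : ℕ) = i then replaceAt ((M.dest t).2 j) p u
        else (M.dest t).2 j⟩ := by
  rw [replaceAt_eq_corec, M.dest_corec]
  show (⟨(M.dest t).1, fun j => M.corec (replaceAtStep u)
      (if (j : ℕ) = i then Sum.inl (p, (M.dest t).2 j)
       else Sum.inr ((M.dest t).2 j))⟩ : (TermPF F ar) (ITerm F ar)) = _
  congr 1
  funext j
  split_ifs with h
  · exact (if_pos h).symm
  · exact (corec_replaceAtStep_inr u _).trans (if_neg h).symm

lemma symAt?_replaceAt_of_not_prefix (u : ITerm F ar) :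
    ∀ {p q : List ℕ} (t : ITerm F ar), ¬ p <+: q →
      symAt? (replaceAt t p u) q = symAt? t q
  | [], _, _, hp => absurd List.nil_prefix hp
  | _ :: _, [], t, _ => by rw [symAt?_nil, symAt?_nil, dest_replaceAt_cons]
  | i :: p, j :: q, t, hp => by
    rw [symAt?_cons, symAt?_cons, dest_replaceAt_cons]
    simp only
    split
    · by_cases hji : j = i
      · subst hji
        simp only [↓reduceIte]
        exact symAt?_replaceAt_of_not_prefix u _
          fun hpq => hp (List.cons_prefix_cons.mpr ⟨rfl, hpq⟩)
      · exact congrArg (symAt? · q) (if_neg hji)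
    · rfl

lemma DisjPos.not_prefix_of_prefix {p₁ p₂ q : List ℕ} (h : DisjPos p₁ p₂)
    (h₁ : p₁ <+: q) : ¬ p₂ <+: q := fun h₂ =>
  (List.prefix_or_prefix_of_prefix h₁ h₂).elim h.1 h.2

lemma replaceAt_eq_self_of_eq_of_disjPos {t s₁ s₂ : ITerm F ar} {p₁ p₂ : List ℕ}
    (hdisj : DisjPos p₁ p₂) (heq : replaceAt t p₁ s₁ = replaceAt t p₂ s₂) :
    replaceAt t p₁ s₁ = t := by
  refine ITerm.ext_symAt? fun q => ?_
  by_cases h₁ : p₁ <+: q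
  · rw [heq]
    exact symAt?_replaceAt_of_not_prefix _ t (hdisj.not_prefix_of_prefix h₁)
  · exact symAt?_replaceAt_of_not_prefix _ t h₁

lemma WeaklyOrthogonal.result_eq_of_reflTransGen
    {R : Set (Rule F ar)} (hWO : WeaklyOrthogonal R) {t : ITerm F ar} {a b : Rdx F ar}
    (h : Relation.ReflTransGen (OverlapIn R t) a b) :
    a.result t = b.result t := by
  induction h with
  | refl => rfl
  | tail _ hbc ih => exact ih.trans (hWO.2 t _ _ hbc.1 hbc.2.1 hbc.2.2)

/-- in a weakly orthogonal TRS, contracting a Y-redex `u` of a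
term `t` leaves `t` unchanged. -/
theorem statement15 {F : Type} {ar : F → ℕ} (R : Set (Rule F ar))
    (hWO : WeaklyOrthogonal R) (t : ITerm F ar) (u : Rdx F ar)
    (hY : YRedex R t u) :
    u.result t = t := by
  obtain ⟨-, v₁, v₂, -, -, hc₁, hc₂, hdisj⟩ := hY
  have e₁ : u.result t = v₁.result t := hWO.result_eq_of_reflTransGen hc₁
  have e₂ : u.result t = v₂.result t := hWO.result_eq_of_reflTransGen hc₂
  rw [e₁]
  exact replaceAt_eq_self_of_eq_of_disjPos hdisj (e₁.symm.trans e₂)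
end
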